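/- (Oscillation bound for products) Let f : [0,1] → R be continuous with M_f = max_{x∈[0,1]} |f(x)|, and let λ : [0,1] → R be Lipschitz with constant L_λ, c_{λ₁} = min_{[0,1]}|λ| and c_{λ₂} = max_{[0,1]}|λ|. Divide [0,1] into n equal subintervals I_i. Then for every i, the maximum variation of the product λf on I_i satisfies c_{λ₁} R_f[I_i] − (L_λ/n) M_f ≤ R_{λf}[I_i] ≤ c_{λ₂} R_f[I_i] + (L_λ/n) M_f. -/

import Mathlib

/-!
On a subinterval of length `1/n` the Lipschitz factor `λ` moves by at most `L_λ/n`, so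
`λ(u) f(u) - λ(v) f(v) = λ(u) (f(u) - f(v)) + (λ(u) - λ(v)) f(v)` differs from
`λ(u) (f(u) - f(v))` by at most `(L_λ/n) M_f`, while `c_{λ₁} ≤ |λ(u)| ≤ c_{λ₂}`.
Taking suprema over `u, v` gives both bounds.
-/

open Set

/-- Maximum variation `R_f[D]` of `f : ℝ → ℝ` on `D ⊆ ℝ`. -/
noncomputable def maxVar (f : ℝ → ℝ) (D : Set ℝ) : ℝ :=
  sSup {d : ℝ | ∃ u ∈ D, ∃ v ∈ D, d = |f u - f v|}

theorem abs_mul_sub_mul_le (a b x y : ℝ) :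
    |a * x - b * y| ≤ |a| * |x - y| + |a - b| * |y| := by
  rw [← abs_mul, ← abs_mul]
  calc |a * x - b * y| = |a * (x - y) + (a - b) * y| := by ring_nf
    _ ≤ _ := abs_add_le _ _

theorem abs_mul_abs_sub_le (a b x y : ℝ) :
    |a| * |x - y| ≤ |a * x - b * y| + |a - b| * |y| := by
  rw [← abs_mul, ← abs_mul]
  calc |a * (x - y)| = |(a * x - b * y) - (a - b) * y| := by ring_nf
    _ ≤ _ := abs_sub _ _

theorem abs_le_abs_add_of_abs_sub_le {g : ℝ → ℝ} {D : Set ℝ} {δ x₀ : ℝ} (hx₀ : x₀ ∈ D)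
    (hg : ∀ u ∈ D, ∀ v ∈ D, |g u - g v| ≤ δ) {x : ℝ} (hx : x ∈ D) :
    |g x| ≤ |g x₀| + δ := by
  linarith [abs_sub_abs_le_abs_sub (g x) (g x₀), hg x hx x₀ hx₀]

theorem abs_sub_le_mul_of_mem_Icc {g : ℝ → ℝ} {S : Set ℝ} {L a b : ℝ} (hL : 0 ≤ L)
    (hg : ∀ u ∈ S, ∀ v ∈ S, |g u - g v| ≤ L * |u - v|) (hab : Icc a b ⊆ S) :
    ∀ u ∈ Icc a b, ∀ v ∈ Icc a b, |g u - g v| ≤ L * (b - a) := fun u hu v hv =>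
  (hg u (hab hu) v (hab hv)).trans <|
    mul_le_mul_of_nonneg_left (Real.dist_eq u v ▸ Real.dist_le_of_mem_Icc hu hv) hL

theorem continuousOn_of_abs_sub_le_mul {g : ℝ → ℝ} {S : Set ℝ} {L : ℝ}
    (hg : ∀ u ∈ S, ∀ v ∈ S, |g u - g v| ≤ L * |u - v|) : ContinuousOn g S :=
  LipschitzOnWith.continuousOn (K := L.toNNReal) <| .of_dist_le_mul fun u hu v hv => by
    rw [Real.dist_eq, Real.dist_eq, Real.coe_toNNReal']
    exact (hg u hu v hv).trans (mul_le_mul_of_nonneg_right (le_max_left L 0) (abs_nonneg _))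

theorem abs_le_sSup_image_abs {g : ℝ → ℝ} {K : Set ℝ} (hK : IsCompact K)
    (hg : ContinuousOn g K) {x : ℝ} (hx : x ∈ K) :
    |g x| ≤ sSup ((fun x => |g x|) '' K) :=
  le_csSup (hK.bddAbove_image hg.abs) (mem_image_of_mem _ hx)

namespace maxVar

variable {f lam : ℝ → ℝ} {D : Set ℝ}

theorem abs_sub_le {M : ℝ} (hM : ∀ x ∈ D, |f x| ≤ M) {u v : ℝ} (hu : u ∈ D) (hv : v ∈ D) :
    |f u - f v| ≤ maxVar f D := by
  refine le_csSup ⟨2 * M, ?_⟩ ⟨u, hu, v, hv, rfl⟩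
  rintro _ ⟨u, hu, v, hv, rfl⟩
  linarith [abs_sub (f u) (f v), hM u hu, hM v hv]

theorem le_of_forall_le (hD : D.Nonempty) {B : ℝ}
    (h : ∀ u ∈ D, ∀ v ∈ D, |f u - f v| ≤ B) : maxVar f D ≤ B := by
  obtain ⟨x, hx⟩ := hD
  refine csSup_le ⟨_, x, hx, x, hx, rfl⟩ ?_
  rintro _ ⟨u, hu, v, hv, rfl⟩
  exact h u hu v hv

theorem mul_le_of_forall_mul_le (hD : D.Nonempty) {c B : ℝ} (hc : 0 ≤ c)
    (h : ∀ u ∈ D, ∀ v ∈ D, c * |f u - f v| ≤ B) : c * maxVar f D ≤ B := by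
  obtain ⟨x, hx⟩ := hD
  rw [maxVar, ← smul_eq_mul, ← Real.sSup_smul_of_nonneg hc]
  refine csSup_le (Nonempty.smul_set ⟨_, x, hx, x, hx, rfl⟩) ?_
  rintro _ ⟨_, ⟨u, hu, v, hv, rfl⟩, rfl⟩
  exact h u hu v hv

variable {M δ : ℝ} (hD : D.Nonempty) (hfM : ∀ x ∈ D, |f x| ≤ M)
  (hlam : ∀ u ∈ D, ∀ v ∈ D, |lam u - lam v| ≤ δ)
include hD hfM hlam

theorem mul_le {C : ℝ} (hlamC : ∀ x ∈ D, |lam x| ≤ C) :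
    maxVar (fun x => lam x * f x) D ≤ C * maxVar f D + δ * M := by
  obtain ⟨x₀, hx₀⟩ := hD
  have hC : 0 ≤ C := (abs_nonneg _).trans (hlamC x₀ hx₀)
  have hδ : 0 ≤ δ := (abs_nonneg _).trans (hlam x₀ hx₀ x₀ hx₀)
  refine le_of_forall_le ⟨x₀, hx₀⟩ fun u hu v hv => ?_
  calc |lam u * f u - lam v * f v| ≤ |lam u| * |f u - f v| + |lam u - lam v| * |f v| :=
        abs_mul_sub_mul_le _ _ _ _
    _ ≤ C * maxVar f D + δ * M := by
        gcongr
        exacts [hlamC u hu, abs_sub_le hfM hu hv, hlam u hu v hv, hfM v hv]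

theorem le_mul {c : ℝ} (hc : 0 ≤ c) (hlamc : ∀ x ∈ D, c ≤ |lam x|) :
    c * maxVar f D - δ * M ≤ maxVar (fun x => lam x * f x) D := by
  obtain ⟨x₀, hx₀⟩ := hD
  have hδ : 0 ≤ δ := (abs_nonneg _).trans (hlam x₀ hx₀ x₀ hx₀)
  have hprod : ∀ x ∈ D, |lam x * f x| ≤ (|lam x₀| + δ) * M := fun x hx => by
    rw [abs_mul]
    exact mul_le_mul (abs_le_abs_add_of_abs_sub_le hx₀ hlam hx) (hfM x hx) (abs_nonneg _)
      (by positivity)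
  rw [sub_le_iff_le_add]
  refine mul_le_of_forall_mul_le ⟨x₀, hx₀⟩ hc fun u hu v hv => ?_
  calc c * |f u - f v| ≤ |lam u| * |f u - f v| := by gcongr; exact hlamc u hu
    _ ≤ |lam u * f u - lam v * f v| + |lam u - lam v| * |f v| := abs_mul_abs_sub_le _ _ _ _
    _ ≤ maxVar (fun x => lam x * f x) D + δ * M := by
        gcongr
        exacts [abs_sub_le hprod hu hv, hlam u hu v hv, hfM v hv]

end maxVar

/-- **Oscillation bound for products.** For continuous `f : [0,1] → ℝ` and Lipschitz
`λ : [0,1] → ℝ` with constant `L_λ`, on every subinterval `I_i = [(i−1)/n, i/n]`: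
`c_{λ₁} R_f[I_i] − (L_λ/n) M_f ≤ R_{λf}[I_i] ≤ c_{λ₂} R_f[I_i] + (L_λ/n) M_f`. -/
theorem stmt17 (f lam : ℝ → ℝ) (hf : ContinuousOn f (Icc 0 1))
    (Llam : ℝ) (hLlam : 0 ≤ Llam)
    (hlip : ∀ u ∈ Icc (0:ℝ) 1, ∀ v ∈ Icc (0:ℝ) 1, |lam u - lam v| ≤ Llam * |u - v|)
    (Mf c1 c2 : ℝ)
    (hMf : Mf = sSup ((fun x => |f x|) '' Icc 0 1))
    (hc1 : c1 = sInf ((fun x => |lam x|) '' Icc 0 1))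
    (hc2 : c2 = sSup ((fun x => |lam x|) '' Icc 0 1))
    (n : ℕ) (hn : 0 < n) (i : ℕ) (hi1 : 1 ≤ i) (hin : i ≤ n) :
    c1 * maxVar f (Icc (((i : ℝ) - 1) / n) ((i : ℝ) / n)) - Llam / n * Mf ≤
        maxVar (fun x => lam x * f x) (Icc (((i : ℝ) - 1) / n) ((i : ℝ) / n)) ∧
      maxVar (fun x => lam x * f x) (Icc (((i : ℝ) - 1) / n) ((i : ℝ) / n)) ≤
        c2 * maxVar f (Icc (((i : ℝ) - 1) / n) ((i : ℝ) / n)) + Llam / n * Mf := by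
  set I := Icc (((i : ℝ) - 1) / n) ((i : ℝ) / n)
  have hn' : (0 : ℝ) < n := by exact_mod_cast hn
  have hi1' : (1 : ℝ) ≤ i := by exact_mod_cast hi1
  have hin' : (i : ℝ) ≤ n := by exact_mod_cast hin
  have hsub : I ⊆ Icc 0 1 := Icc_subset_Icc (by positivity) ((div_le_one hn').2 hin')
  have hne : I.Nonempty := nonempty_Icc.2 (by gcongr; linarith)
  have hosc : ∀ u ∈ I, ∀ v ∈ I, |lam u - lam v| ≤ Llam / n := by
    have hlen : (i : ℝ) / n - ((i : ℝ) - 1) / n = 1 / n := by ring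
    simpa only [hlen, mul_one_div] using abs_sub_le_mul_of_mem_Icc hLlam hlip hsub
  have hfM : ∀ x ∈ I, |f x| ≤ Mf := fun x hx =>
    hMf ▸ abs_le_sSup_image_abs isCompact_Icc hf (hsub hx)
  have hlam_bdd : BddBelow ((fun x => |lam x|) '' Icc 0 1) :=
    ⟨0, by rintro _ ⟨x, -, rfl⟩; exact abs_nonneg _⟩
  refine ⟨maxVar.le_mul hne hfM hosc ?_ fun x hx => ?_, maxVar.mul_le hne hfM hosc fun x hx => ?_⟩
  · exact hc1 ▸ Real.sInf_nonneg (by rintro _ ⟨x, -, rfl⟩; exact abs_nonneg _)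
  · exact hc1 ▸ csInf_le hlam_bdd (mem_image_of_mem _ (hsub hx))
  · exact hc2 ▸ abs_le_sSup_image_abs isCompact_Icc
      (continuousOn_of_abs_sub_le_mul hlip) (hsub hx)
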